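/- arXiv:1607.00243 — 4 statements merged into one kernel-verified Lean document; each statement's English description precedes it below -/
import Mathlib

section
/- In the Killip–Nenciu random Verblunsky model, the family of real random variables ( sup_{|z|=1} log|X_n(z)| − sup_{|z|=1} log|Φ*_{n−1}(z)| )_{n≥1} is tight, where X_n(z) := Φ*_{n−1}(z) − η_n·z·Φ_{n−1}(z). -/
open MeasureTheory ProbabilityTheory
open scoped ENNReal

/-- The Szegő recursion: `szego α k = (Φ_k, Φ*_k)` where
`Φ_0 = Φ*_0 = 1`, `Φ_{k+1}(z) = z Φ_k(z) − conj(α_k) Φ*_k(z)`,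
`Φ*_{k+1}(z) = Φ*_k(z) − α_k z Φ_k(z)`. -/
noncomputable def szego (α : ℕ → ℂ) : ℕ → (ℂ → ℂ) × (ℂ → ℂ)
  | 0 => (fun _ => 1, fun _ => 1)
  | k + 1 =>
      (fun z => z * (szego α k).1 z - (starRingEnd ℂ) (α k) * (szego α k).2 z,
       fun z => (szego α k).2 z - α k * z * (szego α k).1 z)

/-!
On the unit circle `|Φ_m| = |Φ*_m|`, so `X = Φ*_m - η z Φ_m` satisfies `sup |X| ≤ 2 sup |Φ*_m|`,
while both suprema are at least `1` by the maximum principle, the polynomials being `1` at `0`.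
At a point `z₀` of the circle with `|Φ*_m(z₀)| ≥ sup |Φ*_m| / 2` we have
`X(z₀) = Φ*_m(z₀) (1 - η w)` with `w = z₀ Φ_m(z₀) / Φ*_m(z₀)` of modulus one, so
`sup |X| ≥ (sup |Φ*_m| / 2) |1 - η w|`. Hence the difference of the log-suprema is at most `log 2`,
and it is at most `-M` only if `|1 - η w| ≤ 2 e^{-M}`. As `w` is a function of the Verblunsky
coefficients and `η` is uniform on the circle and independent of them, Jordan's inequality
bounds the probability of this by `2 e^{-M}`.
-/

open Metric Set
open scoped Real ComplexConjugate

section SzegoRecursion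

variable (α : ℕ → ℂ)

lemma szego_snd_apply_zero (k : ℕ) : (szego α k).2 0 = 1 := by
  induction k with
  | zero => rfl
  | succ k ih => simp [szego, ih]

lemma differentiable_szego (k : ℕ) :
    Differentiable ℂ (szego α k).1 ∧ Differentiable ℂ (szego α k).2 := by
  induction k with
  | zero => exact ⟨differentiable_const 1, differentiable_const 1⟩
  | succ k ih =>
    obtain ⟨h₁, h₂⟩ := ih
    exact ⟨(differentiable_id.mul h₁).sub (h₂.const_mul _),
      h₂.sub ((differentiable_id.const_mul _).mul h₁)⟩

lemma continuous_szego (k : ℕ) :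
    Continuous (fun p : (ℕ → ℂ) × ℂ => (szego p.1 k).1 p.2) ∧
      Continuous (fun p : (ℕ → ℂ) × ℂ => (szego p.1 k).2 p.2) := by
  induction k with
  | zero => exact ⟨continuous_const, continuous_const⟩
  | succ k ih =>
    obtain ⟨h₁, h₂⟩ := ih
    have hα : Continuous fun p : (ℕ → ℂ) × ℂ => p.1 k := (continuous_apply k).comp continuous_fst
    exact ⟨(continuous_snd.mul h₁).sub ((Complex.continuous_conj.comp hα).mul h₂),
      h₂.sub ((hα.mul continuous_snd).mul h₁)⟩

lemma norm_mul_sub_conj_mul_eq {z A B c : ℂ} (hz : ‖z‖ = 1) (hAB : ‖A‖ = ‖B‖) :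
    ‖z * A - conj c * B‖ = ‖B - c * z * A‖ := by
  have hz' : z * conj z = 1 := by simp [Complex.mul_conj', hz]
  have hAB' : A * conj A = B * conj B := by simp [Complex.mul_conj', hAB]
  rw [← sq_eq_sq₀ (norm_nonneg _) (norm_nonneg _)]
  apply Complex.ofReal_injective
  push_cast
  rw [← Complex.mul_conj', ← Complex.mul_conj']
  simp only [map_sub, map_mul, Complex.conj_conj]
  linear_combination (1 - c * conj c) * (A * conj A) * hz' + (1 - c * conj c) * hAB'

lemma norm_szego_fst_eq_norm_szego_snd (k : ℕ) {z : ℂ} (hz : ‖z‖ = 1) :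
    ‖(szego α k).1 z‖ = ‖(szego α k).2 z‖ := by
  induction k with
  | zero => rfl
  | succ k ih => exact norm_mul_sub_conj_mul_eq hz ih

end SzegoRecursion

section CircleSup

lemma IsCompact.continuous_iSup_subtype {X Y α : Type*} [TopologicalSpace X] [TopologicalSpace Y]
    [ConditionallyCompleteLinearOrder α] [TopologicalSpace α] [OrderTopology α]
    {K : Set Y} (hK : IsCompact K) {G : X → Y → α} (hG : Continuous ↿G) :
    Continuous fun x => ⨆ y : K, G x y := by
  simpa only [sSup_image'] using hK.continuous_sSup hG

lemma Real.iSup_log_eq_log_iSup {ι : Type*} [Nonempty ι] {g : ι → ℝ} (hg : BddAbove (range g))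
    (hg₀ : ∀ i, 0 ≤ g i) (h₁ : 1 ≤ ⨆ i, g i) : ⨆ i, Real.log (g i) = Real.log (⨆ i, g i) := by
  have hle : ∀ i, Real.log (g i) ≤ Real.log (⨆ i, g i) := fun i => by
    rcases (hg₀ i).eq_or_lt with h | h
    · rw [← h, Real.log_zero]
      exact Real.log_nonneg h₁
    · exact Real.log_le_log h (le_ciSup hg i)
  have hbdd : BddAbove (range fun i => Real.log (g i)) := ⟨_, forall_mem_range.2 hle⟩
  refine le_antisymm (ciSup_le hle) ((Real.log_le_iff_le_exp (by linarith)).2 ?_)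
  exact ciSup_le fun i => (Real.le_exp_log _).trans (Real.exp_le_exp.2 (le_ciSup hbdd i))

variable {P Q : ℂ → ℂ}

lemma bddAbove_range_norm_sphere (hP : Continuous P) :
    BddAbove (range fun z : sphere (0 : ℂ) 1 => ‖P z‖) :=
  (isCompact_range (hP.norm.comp continuous_subtype_val)).bddAbove

lemma one_le_iSup_norm_sphere (hP : Differentiable ℂ P) (hP₀ : P 0 = 1) :
    1 ≤ ⨆ z : sphere (0 : ℂ) 1, ‖P z‖ := by
  have hfrontier : ∀ z ∈ frontier (ball (0 : ℂ) 1), ‖P z‖ ≤ ⨆ z : sphere (0 : ℂ) 1, ‖P z‖ := by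
    rw [frontier_ball 0 one_ne_zero]
    exact fun z hz => le_ciSup (bddAbove_range_norm_sphere hP.continuous) ⟨z, hz⟩
  simpa [hP₀] using Complex.norm_le_of_forall_mem_frontier_norm_le isBounded_ball
    hP.diffContOnCl hfrontier (subset_closure (mem_ball_self one_pos))

lemma iSup_log_norm_sphere (hP : Differentiable ℂ P) (hP₀ : P 0 = 1) :
    ⨆ z : sphere (0 : ℂ) 1, Real.log ‖P z‖ = Real.log (⨆ z : sphere (0 : ℂ) 1, ‖P z‖) :=
  Real.iSup_log_eq_log_iSup (bddAbove_range_norm_sphere hP.continuous) (fun _ => norm_nonneg _)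
    (one_le_iSup_norm_sphere hP hP₀)

lemma iSup_norm_sub_mul_le_two_mul (hP : Continuous P)
    (hPQ : ∀ z ∈ sphere (0 : ℂ) 1, ‖Q z‖ = ‖P z‖) {η : ℂ} (hη : ‖η‖ = 1) :
    ⨆ z : sphere (0 : ℂ) 1, ‖P z - η * z * Q z‖ ≤ 2 * ⨆ z : sphere (0 : ℂ) 1, ‖P z‖ := by
  refine ciSup_le fun z => ?_
  have hz : ‖(z : ℂ)‖ = 1 := by simp
  calc ‖P z - η * z * Q z‖ ≤ ‖P z‖ + ‖η * z * Q z‖ := norm_sub_le _ _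
    _ = 2 * ‖P z‖ := by rw [norm_mul, norm_mul, hη, hz, hPQ z z.2]; ring
    _ ≤ 2 * ⨆ z : sphere (0 : ℂ) 1, ‖P z‖ := by
      gcongr; exact le_ciSup (bddAbove_range_norm_sphere hP) z

lemma exists_norm_eq_one_half_iSup_mul_le (hP : Continuous P) (hQ : Continuous Q)
    (hPQ : ∀ z ∈ sphere (0 : ℂ) 1, ‖Q z‖ = ‖P z‖) (hpos : 0 < ⨆ z : sphere (0 : ℂ) 1, ‖P z‖) :
    ∃ w : ℂ, ‖w‖ = 1 ∧ ∀ η : ℂ, (⨆ z : sphere (0 : ℂ) 1, ‖P z‖) / 2 * ‖1 - η * w‖ ≤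
      ⨆ z : sphere (0 : ℂ) 1, ‖P z - η * z * Q z‖ := by
  obtain ⟨z₀, hz₀⟩ := exists_lt_of_lt_ciSup (half_lt_self hpos)
  have hz₀1 : ‖(z₀ : ℂ)‖ = 1 := by simp
  have hPz₀ : P z₀ ≠ 0 := by
    rintro h
    rw [h, norm_zero] at hz₀
    linarith
  refine ⟨z₀ * Q z₀ / P z₀, ?_, fun η => ?_⟩
  · rw [norm_div, norm_mul, hz₀1, one_mul, hPQ z₀ z₀.2, div_self (norm_ne_zero_iff.2 hPz₀)]
  have hX : P z₀ - η * z₀ * Q z₀ = P z₀ * (1 - η * (z₀ * Q z₀ / P z₀)) := by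
    field_simp
  have hXcont : Continuous fun z => P z - η * z * Q z := by fun_prop
  calc _ ≤ ‖P z₀‖ * ‖1 - η * (z₀ * Q z₀ / P z₀)‖ := by gcongr
    _ = ‖P z₀ - η * z₀ * Q z₀‖ := by rw [hX, norm_mul]
    _ ≤ _ := le_ciSup (bddAbove_range_norm_sphere hXcont) z₀

end CircleSup

lemma le_two_mul_exp_neg_of_le_abs_log_sub {a x t M : ℝ} (ha : 0 < a) (hx : 0 < x)
    (hxa : x ≤ 2 * a) (htx : a / 2 * t ≤ x) (hM : Real.log 2 < M)
    (hMd : M ≤ |Real.log x - Real.log a|) : t ≤ 2 * Real.exp (-M) := by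
  have hup : Real.log x - Real.log a ≤ Real.log 2 := by
    rw [← Real.log_div hx.ne' ha.ne']
    exact Real.log_le_log (div_pos hx ha) ((div_le_iff₀ ha).2 hxa)
  have hlow : Real.log x ≤ Real.log a + -M := by
    rcases le_abs'.1 hMd with h | h <;> linarith
  have hxM : x ≤ a * Real.exp (-M) := by
    rw [← Real.exp_log hx, ← Real.exp_log ha, ← Real.exp_add]
    exact Real.exp_le_exp.2 hlow
  nlinarith

/-- `supLogDiff α (n - 1) η_n = sup log |X_n| - sup log |Φ*_{n-1}|` over the unit circle. -/
noncomputable def supLogDiff (α : ℕ → ℂ) (m : ℕ) (η : ℂ) : ℝ :=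
  (⨆ z : sphere (0 : ℂ) 1, Real.log ‖(szego α m).2 z - η * z * (szego α m).1 z‖) -
    ⨆ z : sphere (0 : ℂ) 1, Real.log ‖(szego α m).2 z‖

lemma supLogDiff_eq (α : ℕ → ℂ) (m : ℕ) (η : ℂ) :
    supLogDiff α m η =
      Real.log (⨆ z : sphere (0 : ℂ) 1, ‖(szego α m).2 z - η * z * (szego α m).1 z‖) -
        Real.log (⨆ z : sphere (0 : ℂ) 1, ‖(szego α m).2 z‖) := by
  obtain ⟨hQ, hP⟩ := differentiable_szego α m
  have hX : Differentiable ℂ fun z => (szego α m).2 z - η * z * (szego α m).1 z := by fun_prop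
  rw [supLogDiff, iSup_log_norm_sphere hP (szego_snd_apply_zero α m),
    iSup_log_norm_sphere hX (by simp [szego_snd_apply_zero])]

lemma exists_norm_one_sub_mul_le_of_le_abs_supLogDiff (α : ℕ → ℂ) (m : ℕ) {M : ℝ}
    (hM : Real.log 2 < M) :
    ∃ w : ℂ, ‖w‖ = 1 ∧ ∀ η : ℂ, ‖η‖ = 1 → M ≤ |supLogDiff α m η| →
      ‖1 - η * w‖ ≤ 2 * Real.exp (-M) := by
  obtain ⟨hQ, hP⟩ := differentiable_szego α m
  have hPQ : ∀ z ∈ sphere (0 : ℂ) 1, ‖(szego α m).1 z‖ = ‖(szego α m).2 z‖ := fun z hz =>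
    norm_szego_fst_eq_norm_szego_snd α m (by simpa using hz)
  have hP₁ := one_le_iSup_norm_sphere hP (szego_snd_apply_zero α m)
  obtain ⟨w, hw, hlow⟩ :=
    exists_norm_eq_one_half_iSup_mul_le hP.continuous hQ.continuous hPQ (by linarith)
  refine ⟨w, hw, fun η hη hMη => ?_⟩
  have hX : Differentiable ℂ fun z => (szego α m).2 z - η * z * (szego α m).1 z := by fun_prop
  have hX₁ := one_le_iSup_norm_sphere hX (by simp [szego_snd_apply_zero])
  rw [supLogDiff_eq] at hMη
  exact le_two_mul_exp_neg_of_le_abs_log_sub (by linarith) (by linarith)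
    (iSup_norm_sub_mul_le_two_mul hP.continuous hPQ hη) (hlow η) hM hMη

lemma measurable_supLogDiff (m : ℕ) :
    Measurable fun p : (ℕ → ℂ) × ℝ => supLogDiff p.1 m (Complex.exp (Complex.I * p.2)) := by
  obtain ⟨hQ, hP⟩ := continuous_szego m
  have hQ' : Continuous fun q : ((ℕ → ℂ) × ℝ) × ℂ => (szego q.1.1 m).1 q.2 :=
    hQ.comp (continuous_fst.fst.prodMk continuous_snd)
  have hP' : Continuous fun q : ((ℕ → ℂ) × ℝ) × ℂ => (szego q.1.1 m).2 q.2 :=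
    hP.comp (continuous_fst.fst.prodMk continuous_snd)
  have hX : Continuous ↿fun (p : (ℕ → ℂ) × ℝ) (z : ℂ) =>
      ‖(szego p.1 m).2 z - Complex.exp (Complex.I * p.2) * z * (szego p.1 m).1 z‖ := by
    fun_prop
  have hPn : Continuous ↿fun (p : (ℕ → ℂ) × ℝ) (z : ℂ) => ‖(szego p.1 m).2 z‖ := by fun_prop
  simp only [supLogDiff_eq]
  exact ((isCompact_sphere 0 1).continuous_iSup_subtype hX).measurable.log.sub
    ((isCompact_sphere 0 1).continuous_iSup_subtype hPn).measurable.log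

lemma abs_le_pi_div_two_mul_norm_exp_sub_one {t : ℝ} (ht : |t| ≤ π) :
    |t| ≤ π / 2 * ‖Complex.exp (Complex.I * t) - 1‖ := by
  have h := Real.mul_abs_le_abs_sin (x := t / 2) (by rw [abs_div, abs_two]; linarith)
  rw [Complex.norm_exp_I_mul_ofReal_sub_one, norm_mul, Real.norm_eq_abs, Real.norm_eq_abs,
    abs_two]
  rw [abs_div, abs_two] at h
  have hπ := Real.pi_pos
  field_simp at h ⊢
  linarith

lemma mem_closedBall_union_of_norm_one_sub_exp_mul_le {w : ℂ} (hw : ‖w‖ = 1) {δ v : ℝ}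
    (hv : v ∈ Ico 0 (2 * π)) (hvδ : ‖1 - Complex.exp (Complex.I * v) * w‖ ≤ δ) :
    v ∈ closedBall (-w.arg) (π / 2 * δ) ∪ closedBall (2 * π - w.arg) (π / 2 * δ) := by
  have hbound (t : ℝ) (ht : |t| ≤ π)
      (hte : Complex.exp (Complex.I * t) = Complex.exp (Complex.I * v) * w) : |t| ≤ π / 2 * δ := by
    refine (abs_le_pi_div_two_mul_norm_exp_sub_one ht).trans ?_
    rw [hte, norm_sub_rev]
    gcongr
  have hw' : Complex.exp (Complex.I * v) * w = Complex.exp (Complex.I * ↑(v + w.arg)) := by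
    conv_lhs => rw [← Complex.norm_mul_exp_arg_mul_I w, hw]
    rw [Complex.ofReal_one, one_mul, ← Complex.exp_add]
    push_cast
    ring_nf
  have harg₁ := Complex.neg_pi_lt_arg w
  have harg₂ := Complex.arg_le_pi w
  rcases le_or_gt (v + w.arg) π with h | h
  · left
    rw [mem_closedBall, Real.dist_eq, sub_neg_eq_add]
    exact hbound _ (abs_le.2 ⟨by linarith [hv.1], h⟩) hw'.symm
  · right
    rw [mem_closedBall, Real.dist_eq, sub_sub_eq_add_sub]
    refine hbound _ (abs_le.2 ⟨by linarith, by linarith [hv.2]⟩) ?_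
    have hshift :
        Complex.I * ↑(v + w.arg - 2 * π) = Complex.I * ↑(v + w.arg) - 2 * π * Complex.I := by
      push_cast
      ring
    rw [hshift, Complex.exp_sub, Complex.exp_two_pi_mul_I, div_one, hw']

instance isProbabilityMeasure_uniform_Ico :
    IsProbabilityMeasure ((ENNReal.ofReal (2 * π))⁻¹ • volume.restrict (Ico (0 : ℝ) (2 * π))) := by
  constructor
  rw [Measure.smul_apply, Measure.restrict_apply MeasurableSet.univ, univ_inter, Real.volume_Ico,
    sub_zero, smul_eq_mul, ENNReal.inv_mul_cancel (by simp [Real.pi_pos]) ENNReal.ofReal_ne_top]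

lemma uniform_Ico_setOf_norm_one_sub_exp_mul_le {w : ℂ} (hw : ‖w‖ = 1) {δ : ℝ} (hδ : 0 ≤ δ) :
    ((ENNReal.ofReal (2 * π))⁻¹ • volume.restrict (Ico (0 : ℝ) (2 * π)))
      {v | ‖1 - Complex.exp (Complex.I * v) * w‖ ≤ δ} ≤ ENNReal.ofReal δ := by
  rw [Measure.smul_apply, Measure.restrict_apply' measurableSet_Ico, smul_eq_mul]
  calc _ ≤ (ENNReal.ofReal (2 * π))⁻¹ *
        volume (closedBall (-w.arg) (π / 2 * δ) ∪ closedBall (2 * π - w.arg) (π / 2 * δ)) := by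
        gcongr
        exact fun v hv => mem_closedBall_union_of_norm_one_sub_exp_mul_le hw hv.2 hv.1
    _ ≤ (ENNReal.ofReal (2 * π))⁻¹ * ENNReal.ofReal (2 * π * δ) := by
        gcongr
        refine (measure_union_le _ _).trans ?_
        rw [Real.volume_closedBall, Real.volume_closedBall, ← ENNReal.ofReal_add (by positivity)
          (by positivity)]
        exact le_of_eq (by ring_nf)
    _ = ENNReal.ofReal δ := by
        rw [ENNReal.ofReal_mul (p := 2 * π) (by positivity), ← mul_assoc,
          ENNReal.inv_mul_cancel (by simp [Real.pi_pos]) ENNReal.ofReal_ne_top, one_mul]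

lemma uniform_Ico_setOf_le_abs_supLogDiff_le (α : ℕ → ℂ) (m : ℕ) {M : ℝ}
    (hM : Real.log 2 < M) :
    ((ENNReal.ofReal (2 * π))⁻¹ • volume.restrict (Ico (0 : ℝ) (2 * π)))
      {v | M ≤ |supLogDiff α m (Complex.exp (Complex.I * v))|} ≤
        ENNReal.ofReal (2 * Real.exp (-M)) := by
  obtain ⟨w, hw, hslice⟩ := exists_norm_one_sub_mul_le_of_le_abs_supLogDiff α m hM
  exact (measure_mono fun v hv => hslice _ (by simp) hv).trans
    (uniform_Ico_setOf_norm_one_sub_exp_mul_le hw (by positivity))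

section Independence

variable {Ω ι : Type*} {mΩ : MeasurableSpace Ω} {μ : Measure Ω} {β : Type*} [MeasurableSpace β]
  {f : ι → Ω → β}

lemma ProbabilityTheory.iIndepFun.indepFun_restrict (hf : iIndepFun f μ)
    (hmeas : ∀ i, Measurable (f i)) {S T : Set ι} (hST : Disjoint S T) :
    IndepFun (fun ω (i : S) => f i ω) (fun ω (i : T) => f i ω) μ := by
  have h := indep_iSup_of_disjoint (fun i => (hmeas i).comap_le)
    ((iIndepFun_iff_iIndep _ _ _).1 hf) hST
  have hle (R : Set ι) : MeasurableSpace.comap (fun ω (i : R) => f i ω) MeasurableSpace.pi ≤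
      ⨆ i ∈ R, MeasurableSpace.comap (f i) ‹_› :=
    Measurable.comap_le (@measurable_pi_lambda _ _ _ (⨆ i ∈ R, MeasurableSpace.comap (f i) _) _ _
      fun i => (comap_measurable (f i)).mono
        (le_iSup₂ (f := fun j _ => MeasurableSpace.comap (f j) _) i i.2) le_rfl)
  exact indep_of_indep_of_le_right (indep_of_indep_of_le_left h (hle S)) (hle T)

lemma ProbabilityTheory.iIndepFun.indepFun_restrict₀ [Countable ι] (hf : iIndepFun f μ)
    (hmeas : ∀ i, AEMeasurable (f i) μ) {S T : Set ι} (hST : Disjoint S T) :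
    IndepFun (fun ω (i : S) => f i ω) (fun ω (i : T) => f i ω) μ := by
  have hae (R : Set ι) : (fun ω (i : R) => (hmeas i).mk (f i) ω) =ᵐ[μ] fun ω (i : R) => f i ω := by
    filter_upwards [ae_all_iff.2 fun i : R => (hmeas i).ae_eq_mk] with ω hω
    exact funext fun i => (hω i).symm
  exact ((hf.congr fun i => (hmeas i).ae_eq_mk).indepFun_restrict
    (fun i => (hmeas i).measurable_mk) hST).congr (hae S) (hae T)

lemma ProbabilityTheory.IndepFun.measure_preimage_le_of_forall_measure_slice_le
    [IsProbabilityMeasure μ] {γ : Type*} [MeasurableSpace γ] {X : Ω → β} {Y : Ω → γ}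
    (hXY : IndepFun X Y μ) (hX : AEMeasurable X μ) (hY : AEMeasurable Y μ)
    {E : Set (β × γ)} (hE : MeasurableSet E) {c : ENNReal}
    (hc : ∀ x, μ.map Y (Prod.mk x ⁻¹' E) ≤ c) :
    μ ((fun ω => (X ω, Y ω)) ⁻¹' E) ≤ c := by
  have : IsProbabilityMeasure (μ.map X) := Measure.isProbabilityMeasure_map hX
  rw [← Measure.map_apply_of_aemeasurable (hX.prodMk hY) hE,
    (indepFun_iff_map_prod_eq_prod_map_map hX hY).1 hXY, Measure.prod_apply hE]
  calc _ ≤ ∫⁻ _, c ∂μ.map X := lintegral_mono hc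
    _ = c := by simp

end Independence

lemma withDensity_beta_ne_zero {c : ℝ} (hc : 0 < c) :
    (volume.restrict (Icc (0 : ℝ) 1)).withDensity
      (fun x => ENNReal.ofReal (c * (1 - x) ^ (c - 1))) ≠ 0 := by
  intro h
  have hpos : 0 < ∫⁻ x in Icc (0 : ℝ) 1, ENNReal.ofReal (c * (1 - x) ^ (c - 1)) := by
    rw [lintegral_pos_iff_support (by fun_prop), Measure.restrict_apply' measurableSet_Icc]
    refine lt_of_lt_of_le (by simp : 0 < volume (Ico (0 : ℝ) 1))
      (measure_mono fun x hx => ⟨?_, Ico_subset_Icc_self hx⟩)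
    simp only [Function.mem_support, ne_eq, ENNReal.ofReal_eq_zero, not_le]
    exact mul_pos hc (Real.rpow_pos_of_pos (by linarith [hx.2]) _)
  have hle := withDensity_apply_le (μ := volume.restrict (Icc (0 : ℝ) 1))
    (fun x => ENNReal.ofReal (c * (1 - x) ^ (c - 1))) univ
  rw [h, Measure.restrict_univ, Measure.coe_zero, Pi.zero_apply] at hle
  exact hpos.ne' (le_antisymm hle zero_le)

lemma exists_log_two_lt_and_two_mul_exp_neg_le {ε : ℝ} (hε : 0 < ε) :
    ∃ M : ℝ, Real.log 2 < M ∧ 2 * Real.exp (-M) ≤ ε := by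
  refine ⟨max (Real.log 2 + 1) (Real.log (2 / ε)), (lt_add_one _).trans_le (le_max_left _ _), ?_⟩
  have h : Real.exp (-max (Real.log 2 + 1) (Real.log (2 / ε))) ≤ Real.exp (-Real.log (2 / ε)) :=
    Real.exp_le_exp.2 (neg_le_neg (le_max_right _ _))
  rw [Real.exp_neg (Real.log _), Real.exp_log (by positivity), inv_div] at h
  linarith

section VerblunskyModel

variable {Ω : Type*} [MeasurableSpace Ω] {μ : Measure Ω} {B U V : ℕ → Ω → ℝ}

lemma aemeasurable_verblunsky (hf : ∀ i, AEMeasurable (Sum.elim B (Sum.elim U V) i) μ) :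
    AEMeasurable (fun ω j => (Real.sqrt (B j ω) : ℂ) * Complex.exp (Complex.I * (U j ω))) μ :=
  aemeasurable_pi_lambda _ fun j => by
    have hB : AEMeasurable (B j) μ := hf (.inl j)
    have hU : AEMeasurable (U j) μ := hf (.inr (.inl j))
    fun_prop

lemma indepFun_verblunsky (hindep : iIndepFun (Sum.elim B (Sum.elim U V)) μ)
    (hf : ∀ i, AEMeasurable (Sum.elim B (Sum.elim U V) i) μ) (n : ℕ) :
    IndepFun (fun ω j => (Real.sqrt (B j ω) : ℂ) * Complex.exp (Complex.I * (U j ω))) (V n) μ := by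
  have hS : Disjoint ({.inr (.inr n)}ᶜ : Set (ℕ ⊕ ℕ ⊕ ℕ)) {.inr (.inr n)} := disjoint_compl_left
  have hφ : Measurable fun (x : ({.inr (.inr n)}ᶜ : Set (ℕ ⊕ ℕ ⊕ ℕ)) → ℝ) (j : ℕ) =>
      (Real.sqrt (x ⟨.inl j, by simp⟩) : ℂ) *
        Complex.exp (Complex.I * (x ⟨.inr (.inl j), by simp⟩)) := by
    fun_prop
  exact (hindep.indepFun_restrict₀ hf hS).comp hφ (measurable_pi_apply ⟨_, rfl⟩)

end VerblunskyModel

/-- In the Killip–Nenciu random Verblunsky model, with `α_j = √(B_j) e^{i U_j}`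
(`B_j` Beta(1, β(j+1)/2), `U_j` uniform on `[0,2π)`) and `η_n = e^{i V_n}` uniform on the
unit circle, all independent, the family
`( sup_{|z|=1} log|X_n(z)| − sup_{|z|=1} log|Φ*_{n−1}(z)| )_{n ≥ 1}` is tight, where
`X_n(z) = Φ*_{n−1}(z) − η_n z Φ_{n−1}(z)`. -/
theorem killip_nenciu_sup_diff_tight
    {Ω : Type*} [MeasurableSpace Ω] (μ : Measure Ω) [IsProbabilityMeasure μ]
    (β : ℝ) (hβ : 0 < β)
    (B U V : ℕ → Ω → ℝ)
    (hindep : iIndepFun (Sum.elim B (Sum.elim U V)) μ)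
    (hB : ∀ j, μ.map (B j) = (volume.restrict (Set.Icc (0:ℝ) 1)).withDensity
        (fun x => ENNReal.ofReal ((β * (j + 1) / 2) * (1 - x) ^ (β * (j + 1) / 2 - 1))))
    (hU : ∀ j, μ.map (U j) =
        (ENNReal.ofReal (2 * Real.pi))⁻¹ • volume.restrict (Set.Ico (0:ℝ) (2 * Real.pi)))
    (hV : ∀ n, μ.map (V n) =
        (ENNReal.ofReal (2 * Real.pi))⁻¹ • volume.restrict (Set.Ico (0:ℝ) (2 * Real.pi))) :
    ∀ ε : ℝ, 0 < ε → ∃ M : ℝ, ∀ n : ℕ, 1 ≤ n →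
      μ {ω | M ≤
        |(⨆ z : Metric.sphere (0:ℂ) 1, Real.log (norm
            ((szego (fun j => (Real.sqrt (B j ω) : ℂ) *
                Complex.exp (Complex.I * (U j ω))) (n - 1)).2 (z:ℂ)
              - Complex.exp (Complex.I * (V n ω)) * (z:ℂ) *
                (szego (fun j => (Real.sqrt (B j ω) : ℂ) *
                  Complex.exp (Complex.I * (U j ω))) (n - 1)).1 (z:ℂ))))
          - (⨆ z : Metric.sphere (0:ℂ) 1, Real.log (norm
            ((szego (fun j => (Real.sqrt (B j ω) : ℂ) *
                Complex.exp (Complex.I * (U j ω))) (n - 1)).2 (z:ℂ))))|}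
        ≤ ENNReal.ofReal ε := by
  intro ε hε
  obtain ⟨M, hM, hMε⟩ := exists_log_two_lt_and_two_mul_exp_neg_le hε
  refine ⟨M, fun n _ => ?_⟩
  have hf : ∀ i, AEMeasurable (Sum.elim B (Sum.elim U V) i) μ := by
    rintro (j | j | j)
    · exact .of_map_ne_zero (μ := μ) (f := B j)
        (by rw [hB j]; exact withDensity_beta_ne_zero (by positivity))
    · exact .of_map_ne_zero (μ := μ) (f := U j) (by rw [hU j]; exact IsProbabilityMeasure.ne_zero _)
    · exact .of_map_ne_zero (μ := μ) (f := V j) (by rw [hV j]; exact IsProbabilityMeasure.ne_zero _)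
  refine (indepFun_verblunsky hindep hf n).measure_preimage_le_of_forall_measure_slice_le
    (aemeasurable_verblunsky hf) (hf (.inr (.inr n)))
    (E := {p | M ≤ |supLogDiff p.1 (n - 1) (Complex.exp (Complex.I * p.2))|})
    (measurableSet_le measurable_const (measurable_supLogDiff (n - 1)).abs) fun a => ?_
  rw [hV n]
  exact (uniform_Ico_setOf_le_abs_supLogDiff_le a (n - 1) hM).trans (ENNReal.ofReal_le_ofReal hMε)
end

section
/- For every k ≥ 0 and every θ ∈ ℝ, one has Φ*_k(e^{iθ}) = ∏_{j=0}^{k−1} (1 − α_j·e^{i·Ψ_j(θ)}); in particular Φ*_k(e^{iθ}) ≠ 0. -/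
/-- The Prüfer phases: `Ψ_0(θ) = θ` and
`Ψ_{j+1}(θ) = Ψ_j(θ) + θ − 2 Im Log(1 − α_j e^{i Ψ_j(θ)})`, i.e.
`Ψ_j(θ) = (j+1)θ − 2 ∑_{i<j} Im Log(1 − α_i e^{i Ψ_i(θ)})`. -/
noncomputable def pruferPhase (α : ℕ → ℂ) (θ : ℝ) : ℕ → ℝ
  | 0 => θ
  | j + 1 => pruferPhase α θ j + θ -
      2 * (Complex.log (1 - α j * Complex.exp (Complex.I * (pruferPhase α θ j : ℝ)))).im

/-! On the unit circle the Szegő recursion preserves `Φ_k(z) = z^k · conj Φ*_k(z)`, so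
`Φ*_{k+1}(z) = Φ*_k(z) − α_k z^{k+1} conj Φ*_k(z)`. The Prüfer phase tracks the unimodular
quotient `z^{k+1} conj Φ*_k / Φ*_k = e^{iΨ_k}`: multiplying `Φ*_k` by `w_k = 1 − α_k e^{iΨ_k}`
multiplies it by `z · conj w_k / w_k = z e^{−2i arg w_k}`, which is the recursion for `Ψ_{k+1}`.
Hence `Φ*_{k+1} = Φ*_k w_k`, and `w_k ≠ 0` because `|α_k| < 1`. -/

open Complex Finset
open scoped ComplexConjugate

theorem Complex.exp_neg_two_arg_mul_I_mul_self (w : ℂ) :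
    cexp (-(2 * arg w) * I) * w = conj w := by
  nth_rw 2 3 [← norm_mul_exp_arg_mul_I w]
  rw [map_mul, conj_ofReal, ← exp_conj, map_mul, conj_ofReal, conj_I,
    mul_left_comm, ← exp_add]
  ring_nf

theorem one_sub_mul_ne_zero_of_norm_lt_one {a u : ℂ} (ha : ‖a‖ < 1) (hu : ‖u‖ = 1) :
    1 - a * u ≠ 0 := by
  rw [sub_ne_zero]
  intro h
  have := congrArg norm h
  rw [norm_one, norm_mul, hu, mul_one] at this
  exact ha.ne' this

theorem szego_fst_eq_pow_mul_conj_snd (α : ℕ → ℂ) {z : ℂ} (hz : ‖z‖ = 1) (k : ℕ) :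
    (szego α k).1 z = z ^ k * conj ((szego α k).2 z) := by
  induction k with
  | zero => simp [szego]
  | succ k ih =>
    have hzk : z ^ (k + 1) * conj z ^ (k + 1) = 1 := by
      rw [← mul_pow, Complex.mul_conj, normSq_eq_norm_sq, hz]; norm_num
    simp only [szego, map_sub, map_mul, ih, map_pow, Complex.conj_conj]
    linear_combination conj (α k) * (szego α k).2 z * hzk

section PruferPhase

variable (α : ℕ → ℂ) (θ : ℝ)

theorem exp_pruferPhase_mul_prod (k : ℕ) :
    cexp (I * pruferPhase α θ k) *
        ∏ j ∈ range k, (1 - α j * cexp (I * pruferPhase α θ j)) =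
      cexp (I * θ) ^ (k + 1) *
        conj (∏ j ∈ range k, (1 - α j * cexp (I * pruferPhase α θ j))) := by
  induction k with
  | zero => simp [pruferPhase]
  | succ k ih =>
    set w := 1 - α k * cexp (I * pruferPhase α θ k)
    have hexp : cexp (I * pruferPhase α θ (k + 1)) =
        cexp (I * pruferPhase α θ k) * cexp (I * θ) * cexp (-(2 * arg w) * I) := by
      rw [← exp_add, ← exp_add, pruferPhase, log_im]
      simp only [w]
      push_cast
      ring_nf
    rw [prod_range_succ, map_mul, hexp, ← exp_neg_two_arg_mul_I_mul_self w]
    linear_combination cexp (I * θ) * cexp (-(2 * arg w) * I) * w * ih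

theorem szego_snd_exp_eq_prod (k : ℕ) :
    (szego α k).2 (cexp (I * θ)) =
      ∏ j ∈ range k, (1 - α j * cexp (I * pruferPhase α θ j)) := by
  induction k with
  | zero => simp [szego]
  | succ k ih =>
    have hΦ := szego_fst_eq_pow_mul_conj_snd α (norm_exp_I_mul_ofReal θ) k
    have hΨ := exp_pruferPhase_mul_prod α θ k
    simp only [szego, prod_range_succ, hΦ, ih]
    linear_combination α k * hΨ

end PruferPhase

/-- For every `k` and `θ`, `Φ*_k(e^{iθ}) = ∏_{j<k} (1 − α_j e^{i Ψ_j(θ)})`;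
in particular `Φ*_k(e^{iθ}) ≠ 0`. -/
theorem phiStar_eq_prod_prufer (α : ℕ → ℂ) (hα : ∀ j, ‖α j‖ < 1)
    (k : ℕ) (θ : ℝ) :
    (szego α k).2 (Complex.exp (Complex.I * θ)) =
        ∏ j ∈ Finset.range k,
          (1 - α j * Complex.exp (Complex.I * (pruferPhase α θ j : ℝ))) ∧
      (szego α k).2 (Complex.exp (Complex.I * θ)) ≠ 0 := by
  have h := szego_snd_exp_eq_prod α θ k
  refine ⟨h, h ▸ prod_ne_zero_iff.mpr fun j _ => ?_⟩
  exact one_sub_mul_ne_zero_of_norm_lt_one (hα j) (norm_exp_I_mul_ofReal _)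
end

section
/- Let a, s, t be real numbers with a > 1/2 and s > 0. Then the complex number Γ(a)·Γ(a+s) / ( Γ(a + (s+it)/2) · Γ(a + (s−it)/2) ), where Γ is the complex Gamma function, is a real number lying in the interval [1, exp((s² + t²)/(4a − 2))]. -/
/-!
By Euler's limit formula `Γ(u) = lim n^u n! / ∏_{k ≤ n} (u + k)`, whenever `u + v = z + w` the
powers of `n` and the factorials cancel in `Γ(u)Γ(v) / (Γ(z)Γ(w))`, which becomes the infinite
product `∏_k (z + k)(w + k) / ((u + k)(v + k))`. For `u = a`, `v = a + s` and the conjugate pair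
`z, w = a + (s ± it)/2`, the `k`-th factor is `|z + k|² / ((a + k)(a + k + s)) = 1 + A / d_k` with
`A = (s² + t²)/4` and `d_k = (a + k)(a + k + s)`. Every partial product is therefore real, at least
`1`, and at most `exp (A ∑ 1/d_k)`; as `d_k ≥ (a + k - 1/2)(a + k + 1/2)`, the sum telescopes to at
most `1/(a - 1/2)`.
-/

open Filter Topology Finset

namespace Complex

theorem GammaSeq_mul_GammaSeq_div_GammaSeq_mul_GammaSeq {u v z w : ℂ} (h : u + v = z + w) {n : ℕ}
    (hn : n ≠ 0) :
    GammaSeq u n * GammaSeq v n / (GammaSeq z n * GammaSeq w n) =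
      ∏ k ∈ range (n + 1), (z + k) * (w + k) / ((u + k) * (v + k)) := by
  have hn' : (n : ℂ) ≠ 0 := Nat.cast_ne_zero.2 hn
  have hpow : (n : ℂ) ^ u * (n : ℂ) ^ v = (n : ℂ) ^ z * (n : ℂ) ^ w := by
    rw [← cpow_add _ _ hn', ← cpow_add _ _ hn', h]
  have hc : (n : ℂ) ^ z * (n : ℂ) ^ w * (n.factorial : ℂ) ^ 2 ≠ 0 := by
    simp [hn', Nat.factorial_ne_zero]
  simp only [GammaSeq, prod_div_distrib, prod_mul_distrib]
  calc _ = (n : ℂ) ^ u * (n : ℂ) ^ v * (n.factorial : ℂ) ^ 2 /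
          ((∏ k ∈ range (n + 1), (u + k)) * ∏ k ∈ range (n + 1), (v + k)) /
        ((n : ℂ) ^ z * (n : ℂ) ^ w * (n.factorial : ℂ) ^ 2 /
          ((∏ k ∈ range (n + 1), (z + k)) * ∏ k ∈ range (n + 1), (w + k))) := by ring
    _ = _ := by rw [hpow]; exact div_div_div_cancel_left' _ _ hc

theorem tendsto_prod_div_Gamma_mul_Gamma {u v z w : ℂ} (h : u + v = z + w)
    (hzw : Gamma z * Gamma w ≠ 0) :
    Tendsto (fun n : ℕ ↦ ∏ k ∈ range (n + 1), (z + k) * (w + k) / ((u + k) * (v + k))) atTop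
      (𝓝 (Gamma u * Gamma v / (Gamma z * Gamma w))) :=
  (((GammaSeq_tendsto_Gamma u).mul (GammaSeq_tendsto_Gamma v)).div
    ((GammaSeq_tendsto_Gamma z).mul (GammaSeq_tendsto_Gamma w)) hzw).congr'
    ((eventually_ne_atTop 0).mono fun _ hn ↦
      GammaSeq_mul_GammaSeq_div_GammaSeq_mul_GammaSeq h hn)

theorem exists_ofReal_eq_of_tendsto {α : Type*} {l : Filter α} [l.NeBot] {f : α → ℝ}
    {S : Set ℝ} (hS : IsClosed S) (hf : ∀ᶠ x in l, f x ∈ S) {q : ℂ}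
    (h : Tendsto (fun x ↦ (f x : ℂ)) l (𝓝 q)) : ∃ r ∈ S, q = r := by
  obtain ⟨r, hr, rfl⟩ := (isometry_ofReal.isClosedEmbedding.isClosedMap S hS).mem_of_tendsto h
    (hf.mono fun _ hx ↦ Set.mem_image_of_mem _ hx)
  exact ⟨r, hr, rfl⟩

theorem ofReal_one_add_div_eq (x s t : ℝ) (hx : x ≠ 0) (hxs : x + s ≠ 0) :
    ((1 + (s ^ 2 + t ^ 2) / 4 / (x * (x + s)) : ℝ) : ℂ) =
      (x + (s + t * I) / 2) * (x + (s - t * I) / 2) / (x * (x + s)) := by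
  have hx' : (x : ℂ) ≠ 0 := ofReal_ne_zero.2 hx
  have hxs' : (x : ℂ) + s ≠ 0 := by exact_mod_cast hxs
  push_cast
  field_simp
  linear_combination 4 * (t : ℂ) ^ 2 * I_sq

end Complex

theorem sum_one_div_mul_add_le {a s : ℝ} (ha : 1 / 2 < a) (hs : 0 ≤ s) (n : ℕ) :
    ∑ k ∈ range n, 1 / ((a + k) * (a + k + s)) ≤ 1 / (a - 1 / 2) := by
  set f : ℕ → ℝ := fun k ↦ 1 / (a + k - 1 / 2)
  have hpos (k : ℕ) : 0 < a + k - 1 / 2 := by linarith [k.cast_nonneg (α := ℝ)]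
  have hterm (k : ℕ) : 1 / ((a + k) * (a + k + s)) ≤ f k - f (k + 1) := by
    have hk := hpos k
    have hf : f k - f (k + 1) = 1 / ((a + k - 1 / 2) * (a + k + 1 / 2)) := by
      have hk' : a + (k + 1) - 1 / 2 ≠ 0 := by linarith
      simp only [f, Nat.cast_succ]
      rw [div_sub_div _ _ hk.ne' hk']
      congr 1 <;> ring
    rw [hf]
    exact one_div_le_one_div_of_le (by nlinarith) (by nlinarith)
  calc ∑ k ∈ range n, 1 / ((a + k) * (a + k + s))
      ≤ ∑ k ∈ range n, (f k - f (k + 1)) := sum_le_sum fun k _ ↦ hterm k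
    _ = f 0 - f n := sum_range_sub' f n
    _ ≤ 1 / (a - 1 / 2) := by simpa [f] using (hpos n).le

theorem prod_one_add_div_mul_add_mem_Icc {a s A : ℝ} (ha : 1 / 2 < a) (hs : 0 ≤ s) (hA : 0 ≤ A)
    (n : ℕ) :
    ∏ k ∈ range n, (1 + A / ((a + k) * (a + k + s))) ∈
      Set.Icc 1 (Real.exp (A / (a - 1 / 2))) := by
  have hd (k : ℕ) : 0 ≤ A / ((a + k) * (a + k + s)) := by
    have : 0 < a := by linarith
    positivity
  refine ⟨one_le_prod fun k _ ↦ le_add_of_nonneg_right (hd k),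
    (Real.prod_one_add_le_exp_sum _ hd).trans (Real.exp_le_exp.2 ?_)⟩
  simp_rw [← mul_one_div A, ← mul_sum]
  exact mul_le_mul_of_nonneg_left (sum_one_div_mul_add_le ha hs n) hA

/-- For real `a > 1/2`, `s > 0` and `t` real, the quotient
`Γ(a)Γ(a+s) / (Γ(a+(s+it)/2)Γ(a+(s−it)/2))` is a real number in
`[1, exp((s²+t²)/(4a−2))]`. -/
theorem gamma_quotient_real_bounds (a s t : ℝ) (ha : 1 / 2 < a) (hs : 0 < s) :
    ∃ r : ℝ,
      (Complex.Gamma (a : ℂ) * Complex.Gamma ((a : ℂ) + (s : ℂ))) /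
          (Complex.Gamma ((a : ℂ) + ((s : ℂ) + (t : ℂ) * Complex.I) / 2) *
            Complex.Gamma ((a : ℂ) + ((s : ℂ) - (t : ℂ) * Complex.I) / 2)) = (r : ℂ) ∧
        r ∈ Set.Icc 1 (Real.exp ((s ^ 2 + t ^ 2) / (4 * a - 2))) := by
  have ha0 : 0 < a := by linarith
  have hfactor (k : ℕ) :
      ((a : ℂ) + (s + t * Complex.I) / 2 + k) * ((a : ℂ) + (s - t * Complex.I) / 2 + k) /
          ((a + k) * (a + s + k)) = ((1 + (s ^ 2 + t ^ 2) / 4 / ((a + k) * (a + k + s)) : ℝ) : ℂ) := by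
    rw [Complex.ofReal_one_add_div_eq (a + k) s t (by positivity) (by positivity)]
    push_cast
    ring_nf
  have hre (σ : ℝ) : 0 < ((a : ℂ) + (s + σ * Complex.I) / 2).re := by
    simpa using (by positivity : 0 < a + s / 2)
  have hlim := Complex.tendsto_prod_div_Gamma_mul_Gamma (u := a) (v := a + s)
    (z := a + (s + t * Complex.I) / 2) (w := a + (s - t * Complex.I) / 2) (by ring)
    (mul_ne_zero (Complex.Gamma_ne_zero_of_re_pos (hre t))
      (Complex.Gamma_ne_zero_of_re_pos (by simpa [sub_eq_add_neg] using hre (-t))))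
  simp_rw [hfactor, ← Complex.ofReal_prod] at hlim
  obtain ⟨r, hr, hq⟩ := Complex.exists_ofReal_eq_of_tendsto isClosed_Icc
    (Eventually.of_forall fun n ↦ prod_one_add_div_mul_add_mem_Icc ha hs.le (by positivity) (n + 1))
    hlim
  refine ⟨r, hq, ?_⟩
  convert hr using 3
  rw [div_div]
  ring
end

section
/- Let k ≥ 1 and let ω_1,…,ω_k be complex numbers with |ω_j| < 1 for all j. Define F(θ) = ∑_{j=1}^k arg(1 − ω_j·e^{iθ}), where arg is the principal argument (each term lies in (−π/2, π/2) since Re(1 − ω_j·e^{iθ}) > 0). Then sup_{θ ∈ ℝ} F(θ) ≤ 2π + max_{0 ≤ m < k} F(2πm/k). (F is the continuous version, vanishing at the appropriate branch, of Im log Q(e^{iθ}) for the polynomial Q(z) = ∏_{j=1}^k (1 − ω_j·z), which satisfies Q(0) = 1 and has no zeros in the closed unit disk.) -/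
/-!
Writing `z = w e^{iθ}`, the derivative of `θ/2 - arg (1 - w e^{iθ})` is `1/2 + Re (z / (1 - z))`,
which is nonnegative because `z ↦ z / (1 - z)` maps the unit disc into the half-plane
`Re > -1/2`. Hence `k θ / 2 - F θ` is nondecreasing, i.e. `F` grows with slope at most `k / 2`.
Since `F` is `2π`-periodic and every `θ` lies less than `2π / k` to the right of a grid point
`2πm/k`, this gives `F θ ≤ F (2πm/k) + π`.
-/

open Complex Real

namespace Complex

lemma one_sub_mem_slitPlane {z : ℂ} (hz : ‖z‖ < 1) : 1 - z ∈ slitPlane :=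
  mem_slitPlane_iff.2 <| Or.inl <| by simpa using (re_le_norm z).trans_lt hz

/-- At `z = 1` the quotient is `0` by convention, so the bound holds on the closed disc. -/
lemma neg_half_le_re_div_one_sub {z : ℂ} (hz : ‖z‖ ≤ 1) : -(1 / 2) ≤ (z / (1 - z)).re := by
  have hsq : z.re * z.re + z.im * z.im ≤ 1 := by
    rw [← normSq_apply, ← Complex.sq_norm]
    exact pow_le_one₀ (norm_nonneg z) hz
  rw [div_re, ← add_div]
  rcases (normSq_nonneg (1 - z)).eq_or_lt with h | h
  · rw [← h, div_zero]
    norm_num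
  · rw [le_div_iff₀ h, normSq_apply]
    simp only [sub_re, one_re, sub_im, one_im]
    nlinarith

lemma norm_mul_exp_I_mul_ofReal (w : ℂ) (t : ℝ) : ‖w * exp (I * t)‖ = ‖w‖ := by
  simp [norm_exp]

lemma periodic_arg_one_sub_mul_exp_I_mul (w : ℂ) :
    Function.Periodic (fun t : ℝ => arg (1 - w * exp (I * t))) (2 * π) := fun t => by
  simpa only [mul_comm I, ofReal_add, ofReal_mul, ofReal_ofNat] using
    congrArg (fun z => arg (1 - w * z)) (exp_mul_I_periodic t)

lemma hasDerivAt_arg_one_sub_mul_exp_I_mul {w : ℂ} (hw : ‖w‖ < 1) (θ : ℝ) :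
    HasDerivAt (fun t : ℝ => arg (1 - w * exp (I * t)))
      (-(w * exp (I * θ) / (1 - w * exp (I * θ))).re) θ := by
  have hexp : HasDerivAt (fun t : ℝ => 1 - w * exp (I * t)) (-(w * (exp (I * θ) * I))) θ := by
    simpa using (((hasDerivAt_id θ).ofReal_comp.const_mul I).cexp.const_mul w).const_sub 1
  have hlog := hexp.clog_real (one_sub_mem_slitPlane (by rwa [norm_mul_exp_I_mul_ofReal]))
  have harg := imCLM.hasFDerivAt.comp_hasDerivAt θ hlog
  simp only [Function.comp_def, imCLM_apply, log_im] at harg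
  refine harg.congr_deriv ?_
  rw [show -(w * (exp (I * θ) * I)) / (1 - w * exp (I * θ))
      = -I * (w * exp (I * θ) / (1 - w * exp (I * θ))) by ring]
  simp

lemma monotone_half_sub_arg_one_sub_mul_exp_I_mul {w : ℂ} (hw : ‖w‖ < 1) :
    Monotone fun t : ℝ => t / 2 - arg (1 - w * exp (I * t)) :=
  monotone_of_hasDerivAt_nonneg
    (fun θ => ((hasDerivAt_id θ).div_const 2).sub (hasDerivAt_arg_one_sub_mul_exp_I_mul hw θ))
    fun θ => by
      have := neg_half_le_re_div_one_sub (norm_mul_exp_I_mul_ofReal w θ ▸ hw.le)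
      dsimp only [Pi.zero_apply]
      linarith

end Complex

lemma exists_fin_mul_div_le_lt {T x : ℝ} (hT : 0 < T) (hx : x ∈ Set.Ico 0 T) {k : ℕ}
    (hk : 0 < k) : ∃ m : Fin k, T * m / k ≤ x ∧ x < T * m / k + T / k := by
  have hk' : (0 : ℝ) < k := Nat.cast_pos.2 hk
  have hxk : 0 ≤ x * k / T := by have := hx.1; positivity
  refine ⟨⟨⌊x * k / T⌋₊, (Nat.floor_lt hxk).2 ?_⟩, ?_, ?_⟩
  · rw [div_lt_iff₀ hT]
    nlinarith [hx.2]
  · rw [div_le_iff₀ hk', mul_comm, ← le_div_iff₀ hT]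
    exact Nat.floor_le hxk
  · rw [← add_div, lt_div_iff₀ hk', ← mul_add_one, mul_comm T, ← div_lt_iff₀ hT]
    exact Nat.lt_floor_add_one _

theorem Function.Periodic.exists_le_grid_add {F : ℝ → ℝ} {T c : ℝ} (hF : Function.Periodic F T)
    (hT : 0 < T) (hmono : Monotone fun t => c * t - F t) {k : ℕ} (hk : 0 < k) (θ : ℝ) :
    ∃ m : Fin k, F θ ≤ F (T * m / k) + c * T / k := by
  have hc : 0 ≤ c := by
    have := hmono (le_add_of_nonneg_right hT.le : θ ≤ θ + T)
    dsimp only at this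
    rw [hF θ] at this
    exact nonneg_of_mul_nonneg_left (by linarith) hT
  have hθ : F (toIcoMod hT 0 θ) = F θ := by
    rw [← self_sub_toIcoDiv_zsmul, hF.sub_zsmul_eq]
  obtain ⟨m, hle, hlt⟩ := exists_fin_mul_div_le_lt hT (toIcoMod_mem_Ico' hT θ) hk
  have hgap : c * (toIcoMod hT 0 θ - T * m / k) ≤ c * T / k := by
    rw [mul_div_assoc c]
    exact mul_le_mul_of_nonneg_left (by linarith) hc
  exact ⟨m, by linarith [hmono hle]⟩

/-- For `|ω_j| < 1`, `j = 1,…,k`, and `F(θ) = ∑_j arg(1 − ω_j e^{iθ})`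
(the continuous argument of `Q(e^{iθ})` for `Q(z) = ∏ (1 − ω_j z)`),
`sup_θ F(θ) ≤ 2π + max_{0 ≤ m < k} F(2πm/k)`. -/
theorem sup_arg_le_grid_max (k : ℕ) (hk : 1 ≤ k) (w : Fin k → ℂ)
    (hw : ∀ j, ‖w j‖ < 1) (θ : ℝ) :
    (∑ j, Complex.arg (1 - w j * Complex.exp (Complex.I * θ))) ≤
      2 * Real.pi + ⨆ m : Fin k,
        ∑ j, Complex.arg (1 - w j * Complex.exp (Complex.I * (2 * Real.pi * m / k : ℝ))) := by
  set F : ℝ → ℝ := fun t => ∑ j, arg (1 - w j * exp (I * t))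
  have hper : Function.Periodic F (2 * π) := fun t => by
    simp only [F, periodic_arg_one_sub_mul_exp_I_mul _ t]
  have hmono : Monotone fun t => (k / 2 : ℝ) * t - F t := fun s t hst => by
    have := Finset.sum_le_sum fun j (_ : j ∈ Finset.univ) =>
      monotone_half_sub_arg_one_sub_mul_exp_I_mul (hw j) hst
    simp only [Finset.sum_sub_distrib, Finset.sum_const, Finset.card_univ, Fintype.card_fin,
      nsmul_eq_mul] at this
    simp only [F]
    linarith
  obtain ⟨m, hm⟩ := hper.exists_le_grid_add two_pi_pos hmono hk θ
  rw [show (k / 2 : ℝ) * (2 * π) / k = π by field_simp] at hm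
  calc F θ ≤ F (2 * π * m / k) + π := hm
    _ ≤ (⨆ m : Fin k, F (2 * π * m / k)) + π := by
      gcongr
      exact le_ciSup (f := fun m : Fin k => F (2 * π * m / k)) (Finite.bddAbove_range _) m
    _ ≤ _ := by linarith [pi_pos]
end
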